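/- Let y_j = ζ(t_j) + σ₀(1+ε)ε_j with ε_j i.i.d. standard normal, 0 < ε < 1. Suppose ∑_{j=1}^n |ζ₁(t_j) - ζ₀(t_j)| > rn, ‖ζ - ζ₁‖_∞ < r/4, b_j = sign(ζ₁(t_j) - ζ₀(t_j)), and 4σ₀c_n < r√n. Then P(∑_{j=1}^n b_j (y_j - ζ₀(t_j))/σ₀ ≤ 2c_n√n) ≤ Φ(−r√n/(4σ₀(1+ε))). -/

import Mathlib

open MeasureTheory ProbabilityTheory Real
open scoped NNReal ENNReal

lemma pdf_conv_real {v w : ℝ} (hv : 0 < v) (hw : 0 < w) (x y : ℝ) :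
    ((Real.sqrt (2*π*v))⁻¹ * rexp (-(x-0)^2/(2*v))) *
      ((Real.sqrt (2*π*w))⁻¹ * rexp (-(y-x)^2/(2*w)))
    = ((Real.sqrt (2*π*(v+w)))⁻¹ * rexp (-(y-0)^2/(2*(v+w)))) *
      ((Real.sqrt (2*π*(v*w/(v+w))))⁻¹ * rexp (-(x - v*y/(v+w))^2/(2*(v*w/(v+w))))) := by
  have hvw : 0 < v + w := by linarith
  have hpi := Real.pi_pos
  have hc : (Real.sqrt (2*π*v))⁻¹ * (Real.sqrt (2*π*w))⁻¹
      = (Real.sqrt (2*π*(v+w)))⁻¹ * (Real.sqrt (2*π*(v*w/(v+w))))⁻¹ := by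
    rw [← mul_inv, ← mul_inv, ← Real.sqrt_mul (by positivity), ← Real.sqrt_mul (by positivity)]
    congr 1
    field_simp
  have he : rexp (-(x-0)^2/(2*v)) * rexp (-(y-x)^2/(2*w))
      = rexp (-(y-0)^2/(2*(v+w))) * rexp (-(x - v*y/(v+w))^2/(2*(v*w/(v+w)))) := by
    rw [← Real.exp_add, ← Real.exp_add]
    congr 1
    field_simp
    ring
  calc ((Real.sqrt (2*π*v))⁻¹ * rexp (-(x-0)^2/(2*v))) *
      ((Real.sqrt (2*π*w))⁻¹ * rexp (-(y-x)^2/(2*w)))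
      = ((Real.sqrt (2*π*v))⁻¹ * (Real.sqrt (2*π*w))⁻¹) *
        (rexp (-(x-0)^2/(2*v)) * rexp (-(y-x)^2/(2*w))) := by ring
    _ = _ := by rw [hc, he]; ring

lemma gaussianPDFReal_conv {v w : ℝ≥0} (hv : v ≠ 0) (hw : w ≠ 0) (y : ℝ) :
    ∫ x, gaussianPDFReal 0 v x * gaussianPDFReal x w y
      = gaussianPDFReal 0 (v + w) y := by
  have hv' : (0:ℝ) < v := lt_of_le_of_ne v.coe_nonneg (by exact_mod_cast (Ne.symm hv))
  have hw' : (0:ℝ) < w := lt_of_le_of_ne w.coe_nonneg (by exact_mod_cast (Ne.symm hw))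
  have hvw : v + w ≠ 0 := by positivity
  have hu : (v * w / (v + w) : ℝ≥0) ≠ 0 := by positivity
  have hpt : ∀ x, gaussianPDFReal 0 v x * gaussianPDFReal x w y
      = gaussianPDFReal 0 (v + w) y * gaussianPDFReal ((v:ℝ) * y / ((v:ℝ) + w)) (v * w / (v + w)) x := by
    intro x
    have := pdf_conv_real hv' hw' x y
    simp only [gaussianPDFReal, NNReal.coe_add, NNReal.coe_div, NNReal.coe_mul]
    rw [show ((x : ℝ) - (v:ℝ) * y / ((v:ℝ) + w)) = (x - (v:ℝ)*y/((v:ℝ)+(w:ℝ))) by norm_num] at *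
    calc (Real.sqrt (2*π*v))⁻¹ * rexp (-(x-0)^2/(2*v)) *
          ((Real.sqrt (2*π*w))⁻¹ * rexp (-(y-x)^2/(2*w)))
        = ((Real.sqrt (2*π*(v+w)))⁻¹ * rexp (-(y-0)^2/(2*((v:ℝ)+w)))) *
          ((Real.sqrt (2*π*((v:ℝ)*w/((v:ℝ)+w))))⁻¹ *
            rexp (-(x - (v:ℝ)*y/((v:ℝ)+w))^2/(2*((v:ℝ)*w/((v:ℝ)+w))))) := this
      _ = _ := by norm_num
  simp_rw [hpt]
  rw [integral_const_mul, integral_gaussianPDFReal_eq_one _ hu, mul_one]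

lemma integrable_conv {v w : ℝ≥0} (hv : v ≠ 0) (hw : w ≠ 0) (y : ℝ) :
    Integrable (fun x => gaussianPDFReal 0 v x * gaussianPDFReal x w y) := by
  have hb : ∀ x, gaussianPDFReal x w y = gaussianPDFReal y w x := by
    intro x; simp only [gaussianPDFReal]
    rw [show (y - x)^2 = (x - y)^2 by ring]
  simp_rw [hb]
  have : ∀ x, gaussianPDFReal y w x ≤ (Real.sqrt (2*π*w))⁻¹ := by
    intro x
    simp only [gaussianPDFReal]
    have hw' : (0:ℝ) < w := lt_of_le_of_ne w.coe_nonneg (by exact_mod_cast (Ne.symm hw))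
    have h1 : rexp (-(x - y)^2/(2*(w:ℝ))) ≤ 1 := by
      rw [Real.exp_le_one_iff]
      apply div_nonpos_of_nonpos_of_nonneg <;> [skip; positivity]
      simp [sq_nonneg]
    calc (Real.sqrt (2*π*(w:ℝ)))⁻¹ * rexp (-(x - y)^2/(2*(w:ℝ)))
        ≤ (Real.sqrt (2*π*(w:ℝ)))⁻¹ * 1 := by
          apply mul_le_mul_of_nonneg_left h1 (by positivity)
      _ = _ := mul_one _
  have hcomm : (fun x => gaussianPDFReal 0 v x * gaussianPDFReal y w x)
      = fun x => gaussianPDFReal y w x * gaussianPDFReal 0 v x := by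
    ext x; ring
  rw [hcomm]
  exact Integrable.bdd_mul (integrable_gaussianPDFReal 0 v)
    (stronglyMeasurable_gaussianPDFReal y w).aestronglyMeasurable
    (ae_of_all _ fun x => by
      rw [Real.norm_eq_abs, abs_of_nonneg (gaussianPDFReal_nonneg _ _ _)]; exact this x)

lemma gaussianPDF_conv {v w : ℝ≥0} (hv : v ≠ 0) (hw : w ≠ 0) (y : ℝ) :
    ∫⁻ x, gaussianPDF 0 v x * gaussianPDF x w y = gaussianPDF 0 (v + w) y := by
  have hnn : ∀ x, 0 ≤ gaussianPDFReal 0 v x * gaussianPDFReal x w y :=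
    fun x => mul_nonneg (gaussianPDFReal_nonneg _ _ _) (gaussianPDFReal_nonneg _ _ _)
  simp_rw [gaussianPDF, ← ENNReal.ofReal_mul (gaussianPDFReal_nonneg 0 v _)]
  rw [← ofReal_integral_eq_lintegral_ofReal (integrable_conv hv hw y)
    (Filter.Eventually.of_forall hnn), gaussianPDFReal_conv hv hw y]

lemma meas_pdf2 (w : ℝ≥0) : Measurable (fun p : ℝ × ℝ => gaussianPDF p.1 w p.2) := by
  apply Measurable.ennreal_ofReal
  unfold gaussianPDFReal
  fun_prop

lemma gaussianReal_conv {v w : ℝ≥0} (hv : v ≠ 0) (hw : w ≠ 0) :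
    ((gaussianReal 0 v).prod (gaussianReal 0 w)).map (fun p : ℝ × ℝ => p.1 + p.2)
      = gaussianReal 0 (v + w) := by
  have hvw : v + w ≠ 0 := by positivity
  ext s hs
  rw [Measure.map_apply measurable_add hs, gaussianReal_apply _ hvw s]
  rw [Measure.prod_apply (measurable_add hs)]
  have h1 : ∀ x : ℝ, gaussianReal 0 w (Prod.mk x ⁻¹' ((fun p : ℝ × ℝ => p.1 + p.2) ⁻¹' s))
      = ∫⁻ y in s, gaussianPDF x w y := by
    intro x
    have hpre : (Prod.mk x ⁻¹' ((fun p : ℝ × ℝ => p.1 + p.2) ⁻¹' s)) = (fun y => x + y) ⁻¹' s := rfl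
    rw [hpre, ← Measure.map_apply (measurable_const_add x) hs,
      gaussianReal_map_const_add, zero_add, gaussianReal_apply _ hw s]
  simp_rw [h1]
  rw [gaussianReal_of_var_ne_zero _ hv,
    lintegral_withDensity_eq_lintegral_mul _ (measurable_gaussianPDF 0 v)]
  swap
  · exact Measurable.lintegral_prod_right ((meas_pdf2 w).comp measurable_id)
  · have h2 : ∀ x, gaussianPDF 0 v x * ∫⁻ y in s, gaussianPDF x w y
        = ∫⁻ y in s, gaussianPDF 0 v x * gaussianPDF x w y := by
      intro x
      exact (lintegral_const_mul _ (measurable_gaussianPDF x w)).symm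
    simp only [Pi.mul_apply]
    calc ∫⁻ x, gaussianPDF 0 v x * ∫⁻ y in s, gaussianPDF x w y
        = ∫⁻ x, ∫⁻ y in s, gaussianPDF 0 v x * gaussianPDF x w y := by simp_rw [h2]
      _ = ∫⁻ y in s, ∫⁻ x, gaussianPDF 0 v x * gaussianPDF x w y := by
          rw [lintegral_lintegral_swap]
          exact (((measurable_gaussianPDF 0 v).comp measurable_fst).mul
            (meas_pdf2 w)).aemeasurable
      _ = ∫⁻ y in s, gaussianPDF 0 (v + w) y := by
          exact setLIntegral_congr_fun hs
            (fun y _ => gaussianPDF_conv hv hw y)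

lemma gaussian_indep_add {Ω : Type*} [MeasurableSpace Ω] {P : Measure Ω}
    [IsProbabilityMeasure P] {X Y : Ω → ℝ} (hX : Measurable X) (hY : Measurable Y)
    (h : IndepFun X Y P) {v w : ℝ≥0} (hv : v ≠ 0) (hw : w ≠ 0)
    (hXl : P.map X = gaussianReal 0 v) (hYl : P.map Y = gaussianReal 0 w) :
    P.map (fun ω => X ω + Y ω) = gaussianReal 0 (v + w) := by
  have hpair : P.map (fun ω => (X ω, Y ω)) = (P.map X).prod (P.map Y) :=
    (indepFun_iff_map_prod_eq_prod_map_map hX.aemeasurable hY.aemeasurable).mp h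
  have : P.map (fun ω => X ω + Y ω)
      = (P.map (fun ω => (X ω, Y ω))).map (fun p : ℝ × ℝ => p.1 + p.2) := by
    rw [Measure.map_map measurable_add (hX.prodMk hY)]
    rfl
  rw [this, hpair, hXl, hYl, gaussianReal_conv hv hw]

/-- Law of ∑_{j<k} f j when f j are iid N(0,1)-ish with ±1 signs already absorbed. -/
lemma gaussian_sum_law {Ω : Type*} [MeasurableSpace Ω] {P : Measure Ω}
    [IsProbabilityMeasure P] {f : ℕ → Ω → ℝ} (hmeas : ∀ i, Measurable (f i))
    (hind : iIndepFun f P)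
    (hlaw : ∀ i, P.map (f i) = gaussianReal 0 1) (k : ℕ) (hk : k ≠ 0) :
    P.map (fun ω => ∑ j ∈ Finset.range k, f j ω) = gaussianReal 0 k := by
  induction k with
  | zero => exact absurd rfl hk
  | succ m ih =>
    rcases Nat.eq_zero_or_pos m with hm | hm
    · subst hm
      have h0 : (fun ω => ∑ j ∈ Finset.range 1, f j ω) = f 0 := by
        ext ω; simp
      rw [h0, hlaw 0]
      norm_num
    · have hsum_meas : Measurable fun ω => ∑ j ∈ Finset.range m, f j ω :=
        Finset.measurable_sum _ fun j _ => hmeas j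
      have hindep2 : IndepFun (fun ω => ∑ j ∈ Finset.range m, f j ω) (f m) P := by
        have := hind.indepFun_finsetSum_of_notMem hmeas
          (s := Finset.range m) (i := m) (by simp)
        convert this using 1
        ext ω
        simp [Finset.sum_apply]
      have := gaussian_indep_add hsum_meas (hmeas m) hindep2
        (v := (m : ℝ≥0)) (w := 1) (by exact_mod_cast hm.ne') one_ne_zero
        (ih hm.ne') (hlaw m)
      have hrw : (fun ω => ∑ j ∈ Finset.range (m + 1), f j ω)
          = fun ω => (∑ j ∈ Finset.range m, f j ω) + f m ω := by
        ext ω; rw [Finset.sum_range_succ]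
      rw [hrw, this]
      congr 1
      push_cast
      ring

lemma iIndepFun_congr {Ω : Type*} [MeasurableSpace Ω] {P : Measure Ω}
    {f g : ℕ → Ω → ℝ} (h : iIndepFun f P)
    (hfg : ∀ i, f i =ᵐ[P] g i) : iIndepFun g P := by
  rw [iIndepFun_iff_measure_inter_preimage_eq_mul] at h ⊢
  intro S sets hsets
  have hae : ∀ᵐ ω ∂P, ∀ i ∈ S, f i ω = g i ω :=
    (ae_ball_iff S.countable_toSet).mpr fun i _ => hfg i
  have h2 : (⋂ i ∈ S, g i ⁻¹' sets i) =ᵐ[P] (⋂ i ∈ S, f i ⁻¹' sets i) := by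
    rw [Filter.eventuallyEq_set]
    filter_upwards [hae] with ω hω
    simp only [Set.mem_iInter, Set.mem_preimage]
    exact ⟨fun hmem i hi => by rw [hω i hi]; exact hmem i hi,
      fun hmem i hi => by rw [← hω i hi]; exact hmem i hi⟩
  have h3 : ∀ i ∈ S, P (g i ⁻¹' sets i) = P (f i ⁻¹' sets i) := by
    intro i hi
    apply measure_congr
    rw [Filter.eventuallyEq_set]
    filter_upwards [hfg i] with ω hω
    simp only [Set.mem_preimage, hω]
  rw [measure_congr h2, h S hsets]
  exact (Finset.prod_congr rfl h3).symm

/-- Type II error bound: under y_j = ζ(t_j) + σ₀(1+ε)ε_j with i.i.d. standard normal ε_j,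
if ∑ⱼ|ζ₁(t_j) - ζ₀(t_j)| > rn, ‖ζ - ζ₁‖_∞ < r/4, b_j = sign(ζ₁(t_j) - ζ₀(t_j)) and
4σ₀cₙ < r√n, then P(∑ⱼ bⱼ(y_j - ζ₀(t_j))/σ₀ ≤ 2cₙ√n) ≤ Φ(−r√n/(4σ₀(1+ε))). -/
theorem type_II_error_bound
    {Ω' : Type*} [MeasurableSpace Ω'] {P : Measure Ω'} [IsProbabilityMeasure P]
    (n : ℕ) (z0 z z1 : ℕ → ℝ) (b : ℕ → ℝ) (σ₀ r ε cn : ℝ)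
    (hσ : 0 < σ₀) (hε0 : 0 < ε) (hε1 : ε < 1) (hr : 0 < r) (hcn : 0 < cn)
    (hcn' : 4 * σ₀ * cn < r * Real.sqrt n)
    (hb : ∀ j, b j = if z0 j < z1 j then 1 else -1)
    (hfar : r * n < ∑ j ∈ Finset.range n, |z1 j - z0 j|)
    (hclose : ∀ j, |z j - z1 j| < r / 4)
    (εs : ℕ → Ω' → ℝ)
    (hindep : iIndepFun εs P)
    (hlaw : ∀ i, Measure.map (εs i) P = gaussianReal 0 1)
    (y : ℕ → Ω' → ℝ) (hy : ∀ j ω, y j ω = z j + σ₀ * (1 + ε) * εs j ω) :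
    P {ω | ∑ j ∈ Finset.range n, b j * ((y j ω - z0 j) / σ₀) ≤ 2 * cn * Real.sqrt n}
      ≤ gaussianReal 0 1 (Set.Iic (-(r * Real.sqrt n / (4 * σ₀ * (1 + ε))))) := by
  classical
  -- basic positivity facts
  have hn : 0 < n := by
    rcases Nat.eq_zero_or_pos n with h | h
    · subst h; simp at hfar
    · exact h
  have hn' : (0:ℝ) < n := by exact_mod_cast hn
  have hsq : (0:ℝ) < Real.sqrt n := Real.sqrt_pos.mpr hn'
  have hsqsq : Real.sqrt n * Real.sqrt n = n := Real.mul_self_sqrt hn'.le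
  have h1ε : (0:ℝ) < 1 + ε := by linarith
  set x := r * Real.sqrt n / (4 * σ₀ * (1 + ε)) with hx
  have hxsq : x * Real.sqrt n = r * n / (4 * σ₀ * (1 + ε)) := by
    rw [hx]; field_simp; nlinarith [hsqsq]
  set c : ℝ := -(x * Real.sqrt n) with hc
  -- sign facts
  have hb1 : ∀ j, b j = 1 ∨ b j = -1 := fun j => by rw [hb j]; split <;> simp
  have hbsq : ∀ j, (b j) ^ 2 = 1 := fun j => by rcases hb1 j with h | h <;> rw [h] <;> ring
  have hbabs : ∀ j, |b j| = 1 := fun j => by rcases hb1 j with h | h <;> rw [h] <;> norm_num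
  -- measurable versions of εs
  have hAEm : ∀ i, AEMeasurable (εs i) P := by
    intro i
    by_contra h
    have h1 := hlaw i
    rw [Measure.map_of_not_aemeasurable h] at h1
    have h2 : (gaussianReal 0 1) Set.univ = 1 := measure_univ
    rw [← h1] at h2
    simp at h2
  set e : ℕ → Ω' → ℝ := fun i => (hAEm i).mk (εs i) with he_def
  have he_meas : ∀ i, Measurable (e i) := fun i => (hAEm i).measurable_mk
  have he_ae : ∀ i, εs i =ᵐ[P] e i := fun i => (hAEm i).ae_eq_mk
  have he_law : ∀ i, P.map (e i) = gaussianReal 0 1 := fun i => by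
    rw [← Measure.map_congr (he_ae i), hlaw i]
  have he_ind : iIndepFun e P := iIndepFun_congr hindep he_ae
  -- signed variables
  set f : ℕ → Ω' → ℝ := fun j ω => b j * e j ω with hf_def
  have hf_meas : ∀ j, Measurable (f j) := fun j => (he_meas j).const_mul (b j)
  have hf_ind : iIndepFun f P :=
    he_ind.comp (fun j x => b j * x) (fun j => measurable_const_mul _)
  have hf_law : ∀ j, P.map (f j) = gaussianReal 0 1 := by
    intro j
    have h1 : f j = (fun t => b j * t) ∘ e j := rfl
    rw [h1, ← Measure.map_map (measurable_const_mul _) (he_meas j), he_law j,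
      gaussianReal_map_const_mul]
    have h2 : (⟨(b j) ^ 2, sq_nonneg _⟩ : ℝ≥0) = 1 := by
      ext; simp [hbsq j]
    rw [mul_zero, mul_one]
    congr 1
  have hsum_law : P.map (fun ω => ∑ j ∈ Finset.range n, f j ω) = gaussianReal 0 n :=
    gaussian_sum_law hf_meas hf_ind hf_law n hn.ne'
  -- deterministic drift bound
  have hD : 3 / 4 * (r * n) < ∑ j ∈ Finset.range n, b j * (z j - z0 j) := by
    have hsplit : ∀ j, b j * (z j - z0 j) = b j * (z1 j - z0 j) + b j * (z j - z1 j) := by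
      intro j; ring
    have hterm1 : ∀ j, b j * (z1 j - z0 j) = |z1 j - z0 j| := by
      intro j
      rw [hb j]
      split_ifs with h
      · rw [one_mul, abs_of_nonneg (by linarith)]
      · push_neg at h
        rw [abs_of_nonpos (by linarith)]; ring
    have hterm2 : ∀ j ∈ Finset.range n, -(r / 4) < b j * (z j - z1 j) := by
      intro j _
      have h1 : |b j * (z j - z1 j)| = |z j - z1 j| := by
        rw [abs_mul, hbabs j, one_mul]
      have h2 : -(r / 4) < -|z j - z1 j| := by
        have := hclose j; linarith
      calc -(r / 4) < -|z j - z1 j| := h2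
        _ ≤ b j * (z j - z1 j) := by
            rw [← h1]; exact neg_abs_le _
    have hsum2 : -(n * (r / 4)) < ∑ j ∈ Finset.range n, b j * (z j - z1 j) := by
      have := Finset.sum_lt_sum_of_nonempty (s := Finset.range n)
        (by simp [hn.ne']) hterm2
      simpa using this
    calc 3 / 4 * (r * n) = r * n + -(n * (r / 4)) := by ring
      _ < (∑ j ∈ Finset.range n, |z1 j - z0 j|)
          + ∑ j ∈ Finset.range n, b j * (z j - z1 j) := by
          exact add_lt_add hfar hsum2
      _ = ∑ j ∈ Finset.range n, b j * (z j - z0 j) := by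
          rw [← Finset.sum_add_distrib]
          exact Finset.sum_congr rfl fun j _ => by rw [← hterm1 j, ← hsplit j]
  -- inclusion of events
  have hsub : {ω | ∑ j ∈ Finset.range n, b j * ((y j ω - z0 j) / σ₀) ≤ 2 * cn * Real.sqrt n}
      ⊆ {ω | ∑ j ∈ Finset.range n, b j * εs j ω ≤ c} := by
    intro ω hω
    simp only [Set.mem_setOf_eq] at hω ⊢
    have hexp : ∑ j ∈ Finset.range n, b j * ((y j ω - z0 j) / σ₀)
        = (∑ j ∈ Finset.range n, b j * (z j - z0 j)) / σ₀
          + (1 + ε) * ∑ j ∈ Finset.range n, b j * εs j ω := by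
      rw [Finset.sum_div, Finset.mul_sum, ← Finset.sum_add_distrib]
      refine Finset.sum_congr rfl fun j _ => ?_
      rw [hy j ω]
      field_simp
      ring
    rw [hexp] at hω
    set D := ∑ j ∈ Finset.range n, b j * (z j - z0 j)
    set T := ∑ j ∈ Finset.range n, b j * εs j ω
    have hcnbound : 2 * cn * Real.sqrt n < r * n / (2 * σ₀) := by
      rw [lt_div_iff₀ (by positivity : (0:ℝ) < 2 * σ₀)]
      calc 2 * cn * Real.sqrt n * (2 * σ₀) = (4 * σ₀ * cn) * Real.sqrt n := by ring
        _ < (r * Real.sqrt n) * Real.sqrt n := mul_lt_mul_of_pos_right hcn' hsq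
        _ = r * n := by rw [mul_assoc, hsqsq]
    have hDdiv : 3 / 4 * (r * n) / σ₀ < D / σ₀ := (div_lt_div_iff_of_pos_right hσ).mpr hD
    have hkey : (1 + ε) * T ≤ 2 * cn * Real.sqrt n - D / σ₀ := by linarith
    have hid : r * n / (2 * σ₀) - 3 / 4 * (r * n) / σ₀ = (1 + ε) * c := by
      rw [hc, hxsq]
      field_simp
      ring
    have hT2 : (1 + ε) * T < (1 + ε) * c := by
      calc (1 + ε) * T ≤ 2 * cn * Real.sqrt n - D / σ₀ := hkey
        _ < r * n / (2 * σ₀) - 3 / 4 * (r * n) / σ₀ := by linarith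
        _ = (1 + ε) * c := hid
    exact le_of_lt ((mul_lt_mul_iff_right₀ h1ε).mp hT2)
  -- final chain
  have hsetc : {ω | ∑ j ∈ Finset.range n, b j * εs j ω ≤ c}
      =ᵐ[P] {ω | ∑ j ∈ Finset.range n, f j ω ≤ c} := by
    rw [Filter.eventuallyEq_set]
    have hae : ∀ᵐ ω ∂P, ∀ j ∈ Finset.range n, εs j ω = e j ω :=
      (ae_ball_iff (Finset.range n).countable_toSet).mpr fun j _ => he_ae j
    filter_upwards [hae] with ω hω
    have hsumeq : ∑ j ∈ Finset.range n, b j * εs j ω = ∑ j ∈ Finset.range n, f j ω :=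
      Finset.sum_congr rfl fun j hj => by rw [hω j hj]
    simp only [Set.mem_setOf_eq, hsumeq]
  have hmap : P {ω | ∑ j ∈ Finset.range n, f j ω ≤ c} = gaussianReal 0 n (Set.Iic c) := by
    have hms : Measurable fun ω => ∑ j ∈ Finset.range n, f j ω :=
      Finset.measurable_sum _ fun j _ => hf_meas j
    rw [← hsum_law, Measure.map_apply hms measurableSet_Iic]
    rfl
  have hscale : gaussianReal 0 1 (Set.Iic (-x)) = gaussianReal 0 n (Set.Iic c) := by
    have hmap2 : (gaussianReal 0 (n : ℝ≥0)).map (fun a => (Real.sqrt n)⁻¹ * a)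
        = gaussianReal 0 1 := by
      rw [gaussianReal_map_const_mul]
      congr 1
      · simp
      · ext
        push_cast
        rw [inv_pow, Real.sq_sqrt hn'.le]
        exact inv_mul_cancel₀ hn'.ne'
    rw [← hmap2, Measure.map_apply (measurable_const_mul _) measurableSet_Iic]
    congr 1
    ext a
    simp only [Set.mem_preimage, Set.mem_Iic]
    rw [hc, inv_mul_le_iff₀ hsq]
    constructor <;> intro h <;> nlinarith
  calc P {ω | ∑ j ∈ Finset.range n, b j * ((y j ω - z0 j) / σ₀) ≤ 2 * cn * Real.sqrt n}
      ≤ P {ω | ∑ j ∈ Finset.range n, b j * εs j ω ≤ c} := measure_mono hsub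
    _ = P {ω | ∑ j ∈ Finset.range n, f j ω ≤ c} := measure_congr hsetc
    _ = gaussianReal 0 n (Set.Iic c) := hmap
    _ = gaussianReal 0 1 (Set.Iic (-x)) := hscale.symm
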